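/- arXiv:2404.06891 — 2 statements merged into one kernel-verified Lean document; each statement's English description precedes it below -/
import Mathlib

section
/- For a normalized, monotone, submodular function f on a finite ground set E and cardinality constraint k, the greedy algorithm that iteratively adds the element with largest marginal gain produces, after k steps, a set S_G with f(S_G) ≥ (1 - (1 - 1/k)^k) · max_{|S| ≤ k} f(S) ≥ (1 - e^{-1}) · max_{|S| ≤ k} f(S). -/
/-!
For `|T| ≤ k` let `gᵢ = f T - f (Sᵢ)` be the greedy gap. Submodularity bounds the gain
of adding all of `T` to `Sᵢ` by the sum of the single-element gains, each of which is at most the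
greedy gain; this gives `gᵢ ≤ k (gᵢ - gᵢ₊₁)`, i.e. `gᵢ₊₁ ≤ (1 - 1/k) gᵢ`. Hence
`g_k ≤ (1 - 1/k)^k f T`, and `(1 - 1/k)^k ≤ e⁻¹`.
-/

open Finset

section Submodular

variable {E : Type*} [DecidableEq E] {f : Finset E → ℝ}

theorem union_le_add_sum_insert_sub
    (hsub : ∀ A B : Finset E, f A + f B ≥ f (A ∪ B) + f (A ∩ B)) (A T : Finset E) :
    f (A ∪ T) ≤ f A + ∑ e ∈ T, (f (insert e A) - f A) := by
  induction T using Finset.induction_on with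
  | empty => simp
  | @insert a T haT ih =>
    have hunion : insert a A ∪ (A ∪ T) = A ∪ insert a T := by
      ext; simp only [mem_union, mem_insert]; tauto
    have hinter : insert a A ∩ (A ∪ T) = A := by
      ext; simp only [mem_inter, mem_insert, mem_union]; grind
    have := hsub (insert a A) (A ∪ T)
    rw [hunion, hinter] at this
    rw [sum_insert haT]
    linarith

theorem sub_insert_le_one_sub_inv_mul
    (hmono : ∀ A B : Finset E, A ⊆ B → f A ≤ f B)
    (hsub : ∀ A B : Finset E, f A + f B ≥ f (A ∪ B) + f (A ∩ B))
    {A T : Finset E} {e : E} {k : ℕ} (hT : T.card ≤ k)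
    (hmax : ∀ e' ∉ A, f (insert e' A) ≤ f (insert e A)) :
    f T - f (insert e A) ≤ (1 - 1 / (k : ℝ)) * (f T - f A) := by
  set gain := f (insert e A) - f A
  have hgain : 0 ≤ gain := sub_nonneg.2 (hmono _ _ (subset_insert e A))
  have hle_gain : ∀ e' ∈ T, f (insert e' A) - f A ≤ gain := by
    intro e' _
    by_cases he' : e' ∈ A
    · simpa [insert_eq_of_mem he'] using hgain
    · exact sub_le_sub_right (hmax e' he') _
  have hgap : f T - f A ≤ gain * k :=
    calc f T - f A ≤ f (A ∪ T) - f A := sub_le_sub_right (hmono _ _ subset_union_right) _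
      _ ≤ ∑ e' ∈ T, (f (insert e' A) - f A) := by
        linarith [union_le_add_sum_insert_sub hsub A T]
      _ ≤ T.card * gain := by simpa using sum_le_card_nsmul T _ gain hle_gain
      _ ≤ gain * k := by rw [mul_comm]; gcongr
  have hfrac : (f T - f A) / k ≤ gain := div_le_of_le_mul₀ k.cast_nonneg hgain hgap
  calc f T - f (insert e A) = (f T - f A) - gain := by ring
    _ ≤ (f T - f A) - (f T - f A) / k := by linarith
    _ = (1 - 1 / (k : ℝ)) * (f T - f A) := by ring

end Submodular

theorem greedy_submodular_approximation_general
    {E : Type*} [DecidableEq E] (f : Finset E → ℝ)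
    (k : ℕ) (hk : 0 < k)
    (hf0 : f ∅ = 0)
    (hmono : ∀ A B : Finset E, A ⊆ B → f A ≤ f B)
    (hsub : ∀ A B : Finset E, f A + f B ≥ f (A ∪ B) + f (A ∩ B))
    (S : ℕ → Finset E) (hS0 : S 0 = ∅)
    (hgreedy : ∀ i < k, ∃ e ∉ S i, S (i + 1) = insert e (S i) ∧
      ∀ e' ∉ S i, f (insert e' (S i)) ≤ f (insert e (S i)))
    (Sopt : Finset E) (hcard : Sopt.card ≤ k) :
    f (S k) ≥ (1 - (1 - 1 / (k : ℝ)) ^ k) * f Sopt ∧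
    (1 - (1 - 1 / (k : ℝ)) ^ k) * f Sopt ≥ (1 - Real.exp (-1)) * f Sopt := by
  have hratio : 0 ≤ 1 - 1 / (k : ℝ) :=
    sub_nonneg.2 (div_le_one_of_le₀ (by exact_mod_cast hk) k.cast_nonneg)
  have hgap : f Sopt - f (S k) ≤ (1 - 1 / (k : ℝ)) ^ k * (f Sopt - f (S 0)) := by
    refine le_geom (u := fun i ↦ f Sopt - f (S i)) hratio k fun i hi ↦ ?_
    obtain ⟨e, -, hstep, hmax⟩ := hgreedy i hi
    simpa only [hstep] using sub_insert_le_one_sub_inv_mul hmono hsub hcard hmax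
  have hopt_nonneg : 0 ≤ f Sopt := hf0 ▸ hmono _ _ (empty_subset Sopt)
  have hexp : (1 - 1 / (k : ℝ)) ^ k ≤ Real.exp (-1) :=
    Real.one_sub_div_pow_le_exp_neg (by exact_mod_cast hk)
  rw [hS0, hf0, sub_zero] at hgap
  constructor
  · linarith
  · exact mul_le_mul_of_nonneg_right (by linarith) hopt_nonneg

/-- The greedy algorithm achieves a `(1 - (1 - 1/k)^k) ≥ (1 - e⁻¹)` approximation for
cardinality-constrained maximization of a normalized monotone submodular function. -/
theorem greedy_submodular_approximation
    {E : Type*} [Fintype E] [DecidableEq E] (f : Finset E → ℝ)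
    (k : ℕ) (hk : 0 < k) (hkE : k ≤ Fintype.card E)
    (hf0 : f ∅ = 0)
    (hmono : ∀ A B : Finset E, A ⊆ B → f A ≤ f B)
    (hsub : ∀ A B : Finset E, f A + f B ≥ f (A ∪ B) + f (A ∩ B))
    (S : ℕ → Finset E) (hS0 : S 0 = ∅)
    (hgreedy : ∀ i < k, ∃ e ∉ S i, S (i + 1) = insert e (S i) ∧
      ∀ e' ∉ S i, f (insert e' (S i)) ≤ f (insert e (S i)))
    (Sopt : Finset E) (hcard : Sopt.card ≤ k)
    (hopt : ∀ T : Finset E, T.card ≤ k → f T ≤ f Sopt) :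
    f (S k) ≥ (1 - (1 - 1 / (k : ℝ)) ^ k) * f Sopt ∧
    (1 - (1 - 1 / (k : ℝ)) ^ k) * f Sopt ≥ (1 - Real.exp (-1)) * f Sopt :=
  greedy_submodular_approximation_general f k hk hf0 hmono hsub S hS0 hgreedy Sopt hcard
end

section
/- If S* is an optimal solution of size k for maximizing a normalized monotone submodular f, and Sᵢ is the greedy solution after i steps with marginal gains δᵢ₊₁ = f(Sᵢ₊₁) - f(Sᵢ), then f(S*) - f(Sᵢ) ≤ k·δᵢ₊₁; consequently f(S*) - f(Sᵢ₊₁) ≤ (1 - 1/k)(f(S*) - f(Sᵢ)). -/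
/-!
Adding the elements of `S*` one at a time to `Sᵢ` and applying submodularity at each step bounds
`f (S* ∪ Sᵢ) - f Sᵢ` by the sum of the single-element gains `f (insert x Sᵢ) - f Sᵢ`, `x ∈ S*`.
By the greedy choice each of these is at most `δᵢ₊₁`, and by monotonicity `f S* ≤ f (S* ∪ Sᵢ)`,
so `f S* - f Sᵢ ≤ |S*| δᵢ₊₁ ≤ k δᵢ₊₁`. The second claim is this inequality divided by `k`.
-/

open Finset

section Submodular

variable {E : Type*} [DecidableEq E] (f : Finset E → ℝ)

theorem le_add_sum_marginal_gain (hsub : ∀ A B : Finset E, f A + f B ≥ f (A ∪ B) + f (A ∩ B))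
    (S T : Finset E) : f (T ∪ S) ≤ f S + ∑ x ∈ T, (f (insert x S) - f S) := by
  induction T using Finset.induction_on with
  | empty => simp
  | insert a T ha ih =>
    have hunion : (T ∪ S) ∪ insert a S = insert a T ∪ S := by
      ext x; simp only [mem_union, mem_insert]; tauto
    have hinter : (T ∪ S) ∩ insert a S = S := by
      ext x; simp only [mem_inter, mem_union, mem_insert]; aesop
    have := hsub (T ∪ S) (insert a S)
    rw [hunion, hinter] at this
    rw [sum_insert ha]
    linarith

theorem sub_le_card_mul_greedy_gain (hmono : ∀ A B : Finset E, A ⊆ B → f A ≤ f B)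
    (hsub : ∀ A B : Finset E, f A + f B ≥ f (A ∪ B) + f (A ∩ B))
    (S T : Finset E) (e : E) (hchoice : ∀ e' ∉ S, f (insert e' S) ≤ f (insert e S)) :
    f T - f S ≤ #T * (f (insert e S) - f S) := by
  have hgain : ∀ x ∈ T, f (insert x S) - f S ≤ f (insert e S) - f S := by
    intro x _
    by_cases hx : x ∈ S
    · rw [insert_eq_of_mem hx, sub_self, sub_nonneg]
      exact hmono _ _ (subset_insert e S)
    · linarith [hchoice x hx]
  calc f T - f S ≤ f (T ∪ S) - f S := by linarith [hmono _ _ (subset_union_left : T ⊆ T ∪ S)]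
    _ ≤ ∑ x ∈ T, (f (insert x S) - f S) := by linarith [le_add_sum_marginal_gain f hsub S T]
    _ ≤ ∑ _x ∈ T, (f (insert e S) - f S) := sum_le_sum hgain
    _ = #T * (f (insert e S) - f S) := by rw [sum_const, nsmul_eq_mul]

end Submodular

theorem sub_le_one_sub_inv_mul {gap δ c : ℝ} (hc : 0 ≤ c) (hδ : 0 ≤ δ) (h : gap ≤ c * δ) :
    gap - δ ≤ (1 - 1 / c) * gap := by
  rcases hc.eq_or_lt with rfl | hc
  · simpa using hδ
  · have : gap / c ≤ δ := by rwa [div_le_iff₀ hc, mul_comm]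
    rw [sub_mul, one_mul, one_div_mul_eq_div]
    linarith

theorem greedy_gap_recursion_general
    {E : Type*} [DecidableEq E] (f : Finset E → ℝ)
    (hmono : ∀ A B : Finset E, A ⊆ B → f A ≤ f B)
    (hsub : ∀ A B : Finset E, f A + f B ≥ f (A ∪ B) + f (A ∩ B))
    (k : ℕ)
    (Sopt : Finset E) (hcard : Sopt.card ≤ k)
    (Si : Finset E) (e : E)
    (hchoice : ∀ e' ∉ Si, f (insert e' Si) ≤ f (insert e Si)) :
    f Sopt - f Si ≤ (k : ℝ) * (f (insert e Si) - f Si) ∧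
    f Sopt - f (insert e Si) ≤ (1 - 1 / (k : ℝ)) * (f Sopt - f Si) := by
  have hgain : 0 ≤ f (insert e Si) - f Si := sub_nonneg.2 (hmono _ _ (subset_insert e Si))
  have hgap : f Sopt - f Si ≤ (k : ℝ) * (f (insert e Si) - f Si) :=
    (sub_le_card_mul_greedy_gain f hmono hsub Si Sopt e hchoice).trans
      (mul_le_mul_of_nonneg_right (by exact_mod_cast hcard) hgain)
  refine ⟨hgap, ?_⟩
  have := sub_le_one_sub_inv_mul k.cast_nonneg hgain hgap
  linarith

/-- Greedy recursion for submodular maximization: with `δ = f(Sᵢ₊₁) - f(Sᵢ)` the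
marginal gain of the greedily chosen element, `f(S*) - f(Sᵢ) ≤ k·δ` and hence
`f(S*) - f(Sᵢ₊₁) ≤ (1 - 1/k)(f(S*) - f(Sᵢ))`. -/
theorem greedy_gap_recursion
    {E : Type*} [Fintype E] [DecidableEq E] (f : Finset E → ℝ)
    (hf0 : f ∅ = 0)
    (hmono : ∀ A B : Finset E, A ⊆ B → f A ≤ f B)
    (hsub : ∀ A B : Finset E, f A + f B ≥ f (A ∪ B) + f (A ∩ B))
    (k : ℕ) (hk : 0 < k)
    (Sopt : Finset E) (hcard : Sopt.card ≤ k)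
    (hopt : ∀ T : Finset E, T.card ≤ k → f T ≤ f Sopt)
    (Si : Finset E) (e : E) (he : e ∉ Si)
    (hchoice : ∀ e' ∉ Si, f (insert e' Si) ≤ f (insert e Si)) :
    f Sopt - f Si ≤ (k : ℝ) * (f (insert e Si) - f Si) ∧
    f Sopt - f (insert e Si) ≤ (1 - 1 / (k : ℝ)) * (f Sopt - f Si) :=
  greedy_gap_recursion_general f hmono hsub k Sopt hcard Si e hchoice
end
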